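/- arXiv:2511.11570 — 2 statements merged into one kernel-verified Lean document; each statement's English description precedes it below -/
import Mathlib

section
/- Let N:(0,∞)→ℝ be a differentiable nondecreasing function such that whenever N(τ) ∈ [m, m+1) for a nonnegative integer m, one has τ N'(τ) ≥ (N(τ)−m)(m+1−N(τ)). If N(τ₀) ≤ m+1−ε for some ε ∈ (0, 1/4) and nonnegative integer m, then N((ε/(1−ε))² τ₀) ≤ m + ε. -/
/-!
Put `x = N - m`. The logistic equation `τ z' = z(1 - z)` has the solutions `z = aτ/(1 + aτ)`,
i.e. `z/(1 - z) = aτ`; correspondingly, for a supersolution `τ x' ≥ x(1 - x)` with `x < 1`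
the quotient `(x/(1 - x))/τ` is nondecreasing. If `N` stayed above `m + ε` on
`[(ε/(1-ε))² τ₀, τ₀]`, the odds of `x` would be `> ε/(1-ε)` at the left end and
`≤ (1-ε)/ε` at the right end, and these two bounds are exactly incompatible with the
monotonicity of the quotient over an interval of ratio `(ε/(1-ε))²`.
-/

open Set

noncomputable def odds (p : ℝ) : ℝ := p / (1 - p)

theorem odds_one_sub (p : ℝ) : odds (1 - p) = (odds p)⁻¹ := by
  simp only [odds, sub_sub_cancel, inv_div]

theorem strictMonoOn_odds : StrictMonoOn odds (Iio 1) := by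
  intro p hp q hq hpq
  simp only [mem_Iio] at hp hq
  rw [odds, odds, div_lt_div_iff₀ (sub_pos.2 hp) (sub_pos.2 hq)]
  nlinarith

theorem hasDerivAt_odds {p : ℝ} (hp : p ≠ 1) : HasDerivAt odds (1 / (1 - p) ^ 2) p := by
  have hden : 1 - p ≠ 0 := sub_ne_zero.2 hp.symm
  refine ((hasDerivAt_id' p).div ((hasDerivAt_id' p).const_sub 1) hden).congr_deriv ?_
  field_simp
  ring

theorem monotoneOn_odds_div_of_logistic_le {s : Set ℝ} (hs : Convex ℝ s)
    (hs_pos : ∀ t ∈ s, 0 < t) {x x' : ℝ → ℝ} (hx : ∀ t ∈ s, HasDerivAt x (x' t) t)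
    (hx_lt : ∀ t ∈ s, x t < 1) (hlog : ∀ t ∈ s, x t * (1 - x t) ≤ t * x' t) :
    MonotoneOn (fun t => odds (x t) / t) s := by
  have hderiv : ∀ t ∈ s, HasDerivAt (fun t => odds (x t) / t)
      ((1 / (1 - x t) ^ 2 * x' t * t - odds (x t) * 1) / t ^ 2) t := fun t ht =>
    ((hasDerivAt_odds (hx_lt t ht).ne).comp t (hx t ht)).div (hasDerivAt_id t)
      (hs_pos t ht).ne'
  refine monotoneOn_of_hasDerivWithinAt_nonneg hs
    (fun t ht => (hderiv t ht).continuousAt.continuousWithinAt)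
    (fun t ht => (hderiv t (interior_subset ht)).hasDerivWithinAt) fun t ht => ?_
  replace ht := interior_subset ht
  have h1x : 0 < 1 - x t := sub_pos.2 (hx_lt t ht)
  have hnum : 1 / (1 - x t) ^ 2 * x' t * t - odds (x t) * 1
      = (t * x' t - x t * (1 - x t)) / (1 - x t) ^ 2 := by
    rw [odds]
    field_simp
  rw [hnum]
  have := hlog t ht
  positivity

theorem apply_odds_sq_mul_le_of_logistic_le {x x' : ℝ → ℝ} {ε τ₀ : ℝ}
    (hε0 : 0 < ε) (hε : ε ≤ 1 / 2)
    (hτ₀ : 0 < τ₀) (hx : ∀ t ∈ Icc (odds ε ^ 2 * τ₀) τ₀, HasDerivAt x (x' t) t)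
    (hlog : ∀ t ∈ Icc (odds ε ^ 2 * τ₀) τ₀, x t ∈ Ioo 0 1 →
      x t * (1 - x t) ≤ t * x' t)
    (hmono : MonotoneOn x (Icc (odds ε ^ 2 * τ₀) τ₀)) (hx₀ : x τ₀ ≤ 1 - ε) :
    x (odds ε ^ 2 * τ₀) ≤ ε := by
  have hr : 0 < odds ε := div_pos hε0 (by linarith)
  have hr1 : odds ε ≤ 1 := (div_le_one (by linarith)).2 (by linarith)
  set τ₁ := odds ε ^ 2 * τ₀ with hτ₁_def
  have hτ₁pos : 0 < τ₁ := by positivity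
  have hτ₁τ₀ : τ₁ ≤ τ₀ := mul_le_of_le_one_left hτ₀.le (pow_le_one₀ hr.le hr1)
  have hτ₁I := left_mem_Icc.2 hτ₁τ₀
  have hτ₀I := right_mem_Icc.2 hτ₁τ₀
  by_contra! hx₁
  have hbounds : ∀ t ∈ Icc τ₁ τ₀, ε < x t ∧ x t ≤ 1 - ε := fun t ht =>
    ⟨hx₁.trans_le (hmono hτ₁I ht ht.1), (hmono ht hτ₀I ht.2).trans hx₀⟩
  have hodds := monotoneOn_odds_div_of_logistic_le (convex_Icc τ₁ τ₀)
    (fun t ht => hτ₁pos.trans_le ht.1) hx (fun t ht => by linarith [hbounds t ht]) fun t ht =>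
      hlog t ht ⟨by linarith [hbounds t ht], by linarith [hbounds t ht]⟩
  have hleft : odds ε < odds (x τ₁) :=
    strictMonoOn_odds (mem_Iio.2 (by linarith))
      (mem_Iio.2 (by linarith [hbounds τ₁ hτ₁I])) hx₁
  have hright : odds (x τ₀) ≤ (odds ε)⁻¹ := by
    rw [← odds_one_sub]
    exact strictMonoOn_odds.monotoneOn (mem_Iio.2 (by linarith)) (mem_Iio.2 (by linarith)) hx₀
  refine lt_irrefl ((odds ε)⁻¹ / τ₀) ?_
  calc (odds ε)⁻¹ / τ₀ = odds ε / τ₁ := by rw [hτ₁_def]; field_simp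
    _ < odds (x τ₁) / τ₁ := div_lt_div_of_pos_right hleft hτ₁pos
    _ ≤ odds (x τ₀) / τ₀ := hodds hτ₁I hτ₀I hτ₁τ₀
    _ ≤ (odds ε)⁻¹ / τ₀ := div_le_div_of_nonneg_right hright hτ₀.le

/-- ODE comparison: quantitative frequency drop. If `N` is a nondecreasing differentiable
function on `(0,∞)` satisfying `τ N'(τ) ≥ (N(τ)−m)(m+1−N(τ))` whenever `N(τ) ∈ [m, m+1)`
for a nonnegative integer `m`, and `N(τ₀) ≤ m+1−ε` for some `ε ∈ (0,1/4)`, then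
`N((ε/(1−ε))² τ₀) ≤ m + ε`. -/
theorem statement_1 (N : ℝ → ℝ)
    (hdiff : ∀ τ : ℝ, 0 < τ → DifferentiableAt ℝ N τ)
    (hmono : MonotoneOn N (Set.Ioi (0 : ℝ)))
    (hineq : ∀ τ : ℝ, 0 < τ → ∀ m : ℕ, N τ ∈ Set.Ico (m : ℝ) ((m : ℝ) + 1) →
      (N τ - m) * ((m : ℝ) + 1 - N τ) ≤ τ * deriv N τ)
    (m : ℕ) (ε τ₀ : ℝ) (hε : ε ∈ Set.Ioo (0 : ℝ) (1 / 4)) (hτ₀ : 0 < τ₀)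
    (hN : N τ₀ ≤ (m : ℝ) + 1 - ε) :
    N ((ε / (1 - ε)) ^ 2 * τ₀) ≤ (m : ℝ) + ε := by
  obtain ⟨hε0, hε4⟩ := hε
  have hr : 0 < odds ε := div_pos hε0 (by linarith)
  have hIpos : ∀ t ∈ Icc (odds ε ^ 2 * τ₀) τ₀, 0 < t := fun t ht =>
    (by positivity : 0 < odds ε ^ 2 * τ₀).trans_le ht.1
  have hdrop := apply_odds_sq_mul_le_of_logistic_le (x := fun t => N t - m) (x' := deriv N)
    hε0 (by linarith) hτ₀ (fun t ht => (hdiff t (hIpos t ht)).hasDerivAt.sub_const _)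
    (fun t ht hxt => calc
      (N t - m) * (1 - (N t - m)) = (N t - m) * (m + 1 - N t) := by ring
      _ ≤ t * deriv N t := hineq t (hIpos t ht) m ⟨by linarith [hxt.1], by linarith [hxt.2]⟩)
    (fun a ha b hb hab => sub_le_sub_right (hmono (hIpos a ha) (hIpos b hb) hab) _)
    (by linarith)
  change N (odds ε ^ 2 * τ₀) ≤ m + ε
  linarith
end

section
/- Let w be a function with ∫ w² dν = 1 (ν the standard Gaussian on ℝⁿ) satisfying mild growth, let m be a nonnegative integer, and let N^w = 2∫|∇w|²dν denote its frequency at scale 1. For p̂ in the m-eigenspace P̂_m of −2Δ_f, let N^{p̂} = m be its frequency. Then |N^w − m| ≤ 4∫|∇(w−p̂)|² dν + 8m ∫ (w−p̂)² dν for every p̂ ∈ P̂_m. -/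
open MeasureTheory

noncomputable section

/-- The conjugate heat kernel (Gaussian) measure on `ℝⁿ` centered at `x₀` with
variance parameter `τ`: `ν_{x₀; t₀−τ}` (density `(4πτ)^{−n/2} e^{−|x−x₀|²/(4τ)}`). -/
def gmeas (n : ℕ) (x₀ : EuclideanSpace ℝ (Fin n)) (τ : ℝ) :
    Measure (EuclideanSpace ℝ (Fin n)) :=
  volume.withDensity fun x =>
    ENNReal.ofReal ((4 * Real.pi * τ) ^ (-(n : ℝ) / 2) * Real.exp (-‖x - x₀‖ ^ 2 / (4 * τ)))

/-- The (Euclidean) Laplacian of `w : ℝⁿ → ℝ`. -/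
def lap {n : ℕ} (w : EuclideanSpace ℝ (Fin n) → ℝ) (x : EuclideanSpace ℝ (Fin n)) : ℝ :=
  ∑ i : Fin n,
    fderiv ℝ (fun y => fderiv ℝ w y (EuclideanSpace.single i 1)) x (EuclideanSpace.single i 1)

/-- The drift Laplacian `Δ_f w = Δw − ⟨∇f, ∇w⟩` with `f(x) = |x|²/(4τ)`,
so `∇f(x) = x/(2τ)`. -/
def driftLap {n : ℕ} (τ : ℝ) (w : EuclideanSpace ℝ (Fin n) → ℝ)
    (x : EuclideanSpace ℝ (Fin n)) : ℝ :=
  lap w x - (inner ℝ x (gradient w x) : ℝ) / (2 * τ)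

/-- The standard Gaussian measure `dν = (4π)^{−n/2} e^{−|x|²/4} dx`. -/
def gauss (n : ℕ) : Measure (EuclideanSpace ℝ (Fin n)) := gmeas n 0 1

namespace FreqAux

open Real ENNReal NNReal Filter
open scoped ContDiff

set_option maxHeartbeats 2000000

variable {n : ℕ}

local notation "E" => EuclideanSpace ℝ (Fin n)

def rho (n : ℕ) (x : EuclideanSpace ℝ (Fin n)) : ℝ :=
  (4 * Real.pi) ^ (-(n : ℝ) / 2) * Real.exp (-‖x‖ ^ 2 / 4)

lemma rho_pos (n : ℕ) (x : EuclideanSpace ℝ (Fin n)) : 0 < rho n x := by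
  have h : (0:ℝ) < 4 * Real.pi := by positivity
  exact mul_pos (Real.rpow_pos_of_pos h _) (Real.exp_pos _)

lemma contDiff_rho (n : ℕ) : ContDiff ℝ ∞ (rho n) := by
  apply ContDiff.mul contDiff_const
  apply Real.contDiff_exp.comp
  exact ContDiff.div_const (ContDiff.neg (contDiff_norm_sq ℝ)) 4

lemma gauss_eq (n : ℕ) :
    gauss n = (volume : Measure (EuclideanSpace ℝ (Fin n))).withDensity
      (fun x => ENNReal.ofReal (rho n x)) := by
  unfold gauss gmeas rho
  congr 1
  ext x
  norm_num

lemma integral_gauss (n : ℕ) (f : EuclideanSpace ℝ (Fin n) → ℝ) :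
    ∫ x, f x ∂(gauss n) = ∫ x, rho n x * f x := by
  rw [gauss_eq]
  have hm : Measurable fun x : EuclideanSpace ℝ (Fin n) => (rho n x).toNNReal :=
    (measurable_real_toNNReal.comp (contDiff_rho n).continuous.measurable)
  have : (fun x : EuclideanSpace ℝ (Fin n) => ENNReal.ofReal (rho n x))
      = fun x => ((rho n x).toNNReal : ℝ≥0∞) := rfl
  rw [this, integral_withDensity_eq_integral_smul hm]
  congr 1; ext x
  simp [NNReal.smul_def, Real.coe_toNNReal _ (rho_pos n x).le]

lemma hasFDerivAt_rho (x : E) :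
    HasFDerivAt (rho n) ((-(rho n x) / 2) • (innerSL ℝ x)) x := by
  have h1 : HasFDerivAt (fun y : E => -‖y‖^2/4) (((-1:ℝ)/2) • innerSL ℝ x) x := by
    have h0 := ((hasStrictFDerivAt_norm_sq x).hasFDerivAt).const_mul ((-1:ℝ)/4)
    have he : (fun y : E => -‖y‖^2/4) = fun y : E => ((-1:ℝ)/4) * ‖y‖^2 := by ext y; ring
    rw [he]
    refine h0.congr_fderiv ?_
    ext v
    simp
    ring
  have h3 := h1.exp.const_mul ((4*Real.pi)^(-(n:ℝ)/2))
  refine h3.congr_fderiv ?_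
  ext v
  simp [rho]
  ring

lemma inner_gradient (f : E → ℝ) (x v : E) (h : DifferentiableAt ℝ f x) :
    (inner ℝ (gradient f x) v : ℝ) = fderiv ℝ f x v := by
  have hg := h.hasGradientAt
  rw [hasGradientAt_iff_hasFDerivAt] at hg
  rw [hg.fderiv]
  simp [InnerProductSpace.toDual]

lemma gradient_apply (f : E → ℝ) (x : E) (i : Fin n) (h : DifferentiableAt ℝ f x) :
    gradient f x i = fderiv ℝ f x (EuclideanSpace.single i 1) := by
  rw [← inner_gradient f x _ h, EuclideanSpace.inner_single_right]
  simp

lemma inner_grad_grad (f g : E → ℝ) (x : E) (hf : DifferentiableAt ℝ f x)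
    (hg : DifferentiableAt ℝ g x) :
    (inner ℝ (gradient f x) (gradient g x) : ℝ)
      = ∑ i, fderiv ℝ f x (EuclideanSpace.single i 1)
          * fderiv ℝ g x (EuclideanSpace.single i 1) := by
  rw [PiLp.inner_apply]
  refine Finset.sum_congr rfl fun i _ => ?_
  rw [gradient_apply f x i hf, gradient_apply g x i hg]
  simp
  ring

lemma inner_x_grad (g : E → ℝ) (x : E) (hg : DifferentiableAt ℝ g x) :
    (inner ℝ x (gradient g x) : ℝ) = ∑ i, x i * fderiv ℝ g x (EuclideanSpace.single i 1) := by
  rw [PiLp.inner_apply]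
  refine Finset.sum_congr rfl fun i _ => ?_
  rw [gradient_apply g x i hg]
  simp
  ring

lemma contDiff_d1 {p : E → ℝ} (hp : ContDiff ℝ ∞ p) (v : E) :
    ContDiff ℝ ∞ (fun x : E => fderiv ℝ p x v) :=
  (hp.fderiv_right (by norm_num)).clm_apply contDiff_const

lemma hcs_d1 {u : E → ℝ} (hcu : HasCompactSupport u) (v : E) :
    HasCompactSupport (fun x : E => fderiv ℝ u x v) := by
  have h1 : HasCompactSupport (fderiv ℝ u) := hcu.fderiv (𝕜 := ℝ)
  exact h1.comp_left (g := fun L : E →L[ℝ] ℝ => L v) (by simp)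

lemma continuous_gradient {f : E → ℝ} (hf : ContDiff ℝ ∞ f) :
    Continuous (fun x => gradient f x) := by
  simp only [gradient]
  have h : ContDiff ℝ ∞ (fderiv ℝ f) := hf.fderiv_right (by norm_num)
  exact (LinearIsometryEquiv.continuous _).comp h.continuous

lemma ibp_dir (u p : E → ℝ) (hu : ContDiff ℝ ∞ u) (hcu : HasCompactSupport u)
    (hp : ContDiff ℝ ∞ p) (i : Fin n) :
    ∫ x : E, rho n x * (fderiv ℝ u x (EuclideanSpace.single i 1)
        * fderiv ℝ p x (EuclideanSpace.single i 1))
      = - (∫ x : E, (u x * rho n x)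
          * fderiv ℝ (fun y => fderiv ℝ p y (EuclideanSpace.single i 1)) x
            (EuclideanSpace.single i 1))
        + ∫ x : E, rho n x * (u x * ((x i / 2)
            * fderiv ℝ p x (EuclideanSpace.single i 1))) := by
  set v : E := EuclideanSpace.single i 1 with hv
  have hFc : ContDiff ℝ ∞ (fun x : E => u x * rho n x) := hu.mul (contDiff_rho n)
  have hFcs : HasCompactSupport (fun x : E => u x * rho n x) := hcu.mul_right
  have hg : ContDiff ℝ ∞ (fun x : E => fderiv ℝ p x v) := contDiff_d1 hp v
  have hg2 : Continuous (fun x : E => fderiv ℝ (fun y => fderiv ℝ p y v) x v) :=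
    (contDiff_d1 hg v).continuous
  have hxi : Continuous fun x : E => x i :=
    (continuous_apply i).comp (PiLp.continuous_ofLp 2 _)
  have hF' : ∀ x : E, fderiv ℝ (fun x : E => u x * rho n x) x v
      = rho n x * fderiv ℝ u x v + u x * (-(rho n x) / 2 * (x i)) := by
    intro x
    have h1 : HasFDerivAt (fun x : E => u x * rho n x)
        (u x • ((-(rho n x) / 2) • (innerSL ℝ x)) + rho n x • fderiv ℝ u x) x :=
      ((hu.differentiable (by norm_num) x).hasFDerivAt).mul (hasFDerivAt_rho x)
    rw [h1.fderiv]
    have hxiv : (innerSL ℝ x) v = x i := by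
      rw [hv]
      simp [EuclideanSpace.inner_single_right, real_inner_comm]
    simp only [ContinuousLinearMap.add_apply, ContinuousLinearMap.coe_smul', Pi.smul_apply,
      smul_eq_mul, hxiv]
    ring
  have int1 : Integrable (fun x : E => rho n x * (fderiv ℝ u x v * fderiv ℝ p x v))
      (volume : Measure E) := by
    apply Continuous.integrable_of_hasCompactSupport
    · exact (contDiff_rho n).continuous.mul (((contDiff_d1 hu v).continuous).mul hg.continuous)
    · exact (HasCompactSupport.mul_right (hcs_d1 hcu v)).mul_left
  have int2 : Integrable (fun x : E => rho n x * (u x * ((x i / 2) * fderiv ℝ p x v)))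
      (volume : Measure E) := by
    apply Continuous.integrable_of_hasCompactSupport
    · exact (contDiff_rho n).continuous.mul (hu.continuous.mul
        ((hxi.div_const 2).mul hg.continuous))
    · exact (hcu.mul_right).mul_left
  have key : ∫ x : E, (fun x : E => u x * rho n x) x * fderiv ℝ (fun y => fderiv ℝ p y v) x v
      = - ∫ x : E, fderiv ℝ (fun x : E => u x * rho n x) x v * fderiv ℝ p x v := by
    apply integral_mul_fderiv_eq_neg_fderiv_mul_of_integrable
    · apply Continuous.integrable_of_hasCompactSupport
      · exact ((contDiff_d1 hFc v).continuous).mul hg.continuous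
      · exact HasCompactSupport.mul_right (hcs_d1 hFcs v)
    · apply Continuous.integrable_of_hasCompactSupport
      · exact hFc.continuous.mul hg2
      · exact HasCompactSupport.mul_right hFcs
    · apply Continuous.integrable_of_hasCompactSupport
      · exact hFc.continuous.mul hg.continuous
      · exact HasCompactSupport.mul_right hFcs
    · exact fun x _ => hFc.differentiable (by norm_num) x
    · exact fun x _ => hg.differentiable (by norm_num) x
  have expand : ∫ x : E, fderiv ℝ (fun x : E => u x * rho n x) x v * fderiv ℝ p x v
      = (∫ x : E, rho n x * (fderiv ℝ u x v * fderiv ℝ p x v))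
        - ∫ x : E, rho n x * (u x * ((x i / 2) * fderiv ℝ p x v)) := by
    rw [← integral_sub int1 int2]
    congr 1
    ext x
    rw [hF' x]
    ring
  rw [expand] at key
  simp only at key ⊢
  linarith [key]

lemma ibp_compact (u p : E → ℝ) (hu : ContDiff ℝ ∞ u) (hcu : HasCompactSupport u)
    (hp : ContDiff ℝ ∞ p) :
    ∫ x : E, rho n x * (inner ℝ (gradient u x) (gradient p x) : ℝ)
      = - ∫ x : E, rho n x * (u x * driftLap 1 p x) := by
  have hxi : ∀ i : Fin n, Continuous fun x : E => x i := fun i =>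
    (continuous_apply i).comp (PiLp.continuous_ofLp 2 _)
  have hcd1p : ∀ i : Fin n, Continuous fun x : E =>
      fderiv ℝ p x (EuclideanSpace.single i 1) := fun i => (contDiff_d1 hp _).continuous
  have hcd2p : ∀ i : Fin n, Continuous fun x : E =>
      fderiv ℝ (fun y => fderiv ℝ p y (EuclideanSpace.single i 1)) x
        (EuclideanSpace.single i 1) := fun i => (contDiff_d1 (contDiff_d1 hp _) _).continuous
  have Ia : ∀ i : Fin n, Integrable (fun x : E => rho n x
      * (fderiv ℝ u x (EuclideanSpace.single i 1) * fderiv ℝ p x (EuclideanSpace.single i 1)))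
      (volume : Measure E) := fun i => by
    apply Continuous.integrable_of_hasCompactSupport
    · exact (contDiff_rho n).continuous.mul ((contDiff_d1 hu _).continuous.mul (hcd1p i))
    · exact ((hcs_d1 hcu _).mul_right).mul_left
  have Ib : ∀ i : Fin n, Integrable (fun x : E => (u x * rho n x)
      * fderiv ℝ (fun y => fderiv ℝ p y (EuclideanSpace.single i 1)) x
        (EuclideanSpace.single i 1)) (volume : Measure E) := fun i => by
    apply Continuous.integrable_of_hasCompactSupport
    · exact (hu.continuous.mul (contDiff_rho n).continuous).mul (hcd2p i)
    · exact (hcu.mul_right).mul_right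
  have Ic : ∀ i : Fin n, Integrable (fun x : E => rho n x * (u x * ((x i / 2)
      * fderiv ℝ p x (EuclideanSpace.single i 1)))) (volume : Measure E) := fun i => by
    apply Continuous.integrable_of_hasCompactSupport
    · exact (contDiff_rho n).continuous.mul (hu.continuous.mul
        (((hxi i).div_const 2).mul (hcd1p i)))
    · exact (hcu.mul_right).mul_left
  have Id : Integrable (fun x : E => rho n x * (u x * lap p x)) (volume : Measure E) := by
    apply Continuous.integrable_of_hasCompactSupport
    · exact (contDiff_rho n).continuous.mul (hu.continuous.mul
        (continuous_finset_sum _ fun i _ => hcd2p i))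
    · exact (hcu.mul_right).mul_left
  have Ie : Integrable (fun x : E => rho n x * (u x * ((∑ i, x i
      * fderiv ℝ p x (EuclideanSpace.single i 1)) / 2))) (volume : Measure E) := by
    apply Continuous.integrable_of_hasCompactSupport
    · exact (contDiff_rho n).continuous.mul (hu.continuous.mul
        ((continuous_finset_sum _ fun i _ => (hxi i).mul (hcd1p i)).div_const 2))
    · exact (hcu.mul_right).mul_left
  have e1 : ∫ x : E, rho n x * (inner ℝ (gradient u x) (gradient p x) : ℝ)
      = ∑ i : Fin n, ∫ x : E, rho n x * (fderiv ℝ u x (EuclideanSpace.single i 1)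
          * fderiv ℝ p x (EuclideanSpace.single i 1)) := by
    rw [← integral_finset_sum _ (fun i _ => Ia i)]
    congr 1
    ext x
    rw [inner_grad_grad u p x (hu.differentiable (by norm_num) x)
      (hp.differentiable (by norm_num) x), Finset.mul_sum]
  have e3 : ∑ i : Fin n, ∫ x : E, (u x * rho n x)
      * fderiv ℝ (fun y => fderiv ℝ p y (EuclideanSpace.single i 1)) x
        (EuclideanSpace.single i 1)
      = ∫ x : E, rho n x * (u x * lap p x) := by
    rw [← integral_finset_sum _ (fun i _ => Ib i)]
    congr 1
    ext x
    simp only [lap, Finset.mul_sum]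
    exact Finset.sum_congr rfl fun i _ => by ring
  have e4 : ∑ i : Fin n, ∫ x : E, rho n x * (u x * ((x i / 2)
      * fderiv ℝ p x (EuclideanSpace.single i 1)))
      = ∫ x : E, rho n x * (u x * ((∑ i, x i
          * fderiv ℝ p x (EuclideanSpace.single i 1)) / 2)) := by
    rw [← integral_finset_sum _ (fun i _ => Ic i)]
    congr 1
    ext x
    rw [Finset.sum_div, Finset.mul_sum, Finset.mul_sum]
    exact Finset.sum_congr rfl fun i _ => by ring
  have e5 : ∫ x : E, rho n x * (u x * driftLap 1 p x)
      = (∫ x : E, rho n x * (u x * lap p x)) - ∫ x : E, rho n x * (u x * ((∑ i, x i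
          * fderiv ℝ p x (EuclideanSpace.single i 1)) / 2)) := by
    rw [← integral_sub Id Ie]
    congr 1
    ext x
    rw [driftLap, inner_x_grad p x (hp.differentiable (by norm_num) x)]
    ring
  calc ∫ x : E, rho n x * (inner ℝ (gradient u x) (gradient p x) : ℝ)
      = ∑ i : Fin n, ∫ x : E, rho n x * (fderiv ℝ u x (EuclideanSpace.single i 1)
          * fderiv ℝ p x (EuclideanSpace.single i 1)) := e1
    _ = ∑ i : Fin n, (- (∫ x : E, (u x * rho n x)
          * fderiv ℝ (fun y => fderiv ℝ p y (EuclideanSpace.single i 1)) x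
            (EuclideanSpace.single i 1))
        + ∫ x : E, rho n x * (u x * ((x i / 2)
            * fderiv ℝ p x (EuclideanSpace.single i 1)))) :=
      Finset.sum_congr rfl fun i _ => ibp_dir u p hu hcu hp i
    _ = - ∫ x : E, rho n x * (u x * driftLap 1 p x) := by
      rw [Finset.sum_add_distrib, Finset.sum_neg_distrib, e3, e4, e5]
      ring

/-- integrable product from integrable squares -/
lemma integrable_mul_sq {f g : E → ℝ} (hm : AEStronglyMeasurable (fun x => f x * g x) (gauss n))
    (h1 : Integrable (fun x => f x ^ 2) (gauss n)) (h2 : Integrable (fun x => g x ^ 2) (gauss n)) :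
    Integrable (fun x => f x * g x) (gauss n) := by
  refine Integrable.mono ((h1.add h2).div_const 2) hm ?_
  filter_upwards with x
  simp only [Pi.add_apply]
  rw [Real.norm_eq_abs, Real.norm_eq_abs, abs_mul]
  rw [abs_of_nonneg (by positivity : (0:ℝ) ≤ (f x ^ 2 + g x ^ 2) / 2)]
  nlinarith [sq_abs (f x), sq_abs (g x), sq_nonneg (|f x| - |g x|)]

lemma ibp_gauss (g p : EuclideanSpace ℝ (Fin n) → ℝ)
    (hg : ContDiff ℝ ∞ g) (hp : ContDiff ℝ ∞ p)
    (hgL2 : Integrable (fun x => (g x) ^ 2) (gauss n))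
    (hggrad : Integrable (fun x => ‖gradient g x‖ ^ 2) (gauss n))
    (hpL2 : Integrable (fun x => (p x) ^ 2) (gauss n))
    (hpgrad : Integrable (fun x => ‖gradient p x‖ ^ 2) (gauss n))
    (m : ℝ) (hpeig : ∀ x, driftLap 1 p x = -(m / 2) * p x) :
    ∫ x, (inner ℝ (gradient g x) (gradient p x) : ℝ) ∂(gauss n)
      = (m / 2) * ∫ x, g x * p x ∂(gauss n) := by
  classical
  set ν := gauss n with hν
  have hgc := continuous_gradient hg
  have hpc := continuous_gradient hp
  set χ : ContDiffBump (0 : E) := ⟨1, 2, one_pos, one_lt_two⟩ with hχ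
  obtain ⟨M, hM⟩ : ∃ M, ∀ y : E, ‖fderiv ℝ (⇑χ) y‖ ≤ M := by
    obtain ⟨M, hM⟩ := (χ.hasCompactSupport.fderiv (𝕜 := ℝ)).exists_bound_of_continuous
      ((χ.contDiff (n := (⊤ : ℕ∞))).fderiv_right (m := ∞) (by norm_num)).continuous
    exact ⟨M, hM⟩
  have hM0 : 0 ≤ M := le_trans (norm_nonneg _) (hM 0)
  set c : ℕ → ℝ := fun k => (k : ℝ) + 1 with hcdef
  have hc1 : ∀ k, 1 ≤ c k := fun k => by
    change (1:ℝ) ≤ (k : ℝ) + 1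
    have : (0:ℝ) ≤ (k:ℝ) := Nat.cast_nonneg k
    linarith
  have hc0 : ∀ k, 0 < c k := fun k => lt_of_lt_of_le one_pos (hc1 k)
  set χk : ℕ → E → ℝ := fun k x => χ ((c k)⁻¹ • x) with hχk
  have hχks : ∀ k, ContDiff ℝ ∞ (χk k) := fun k =>
    (χ.contDiff (n := (⊤ : ℕ∞))).comp (contDiff_id.const_smul ((c k)⁻¹))
  have hχk01 : ∀ k (x : E), 0 ≤ χk k x ∧ χk k x ≤ 1 := fun k x => ⟨χ.nonneg, χ.le_one⟩
  have hχkd : ∀ k (x : E), HasFDerivAt (χk k)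
      ((fderiv ℝ (⇑χ) ((c k)⁻¹ • x)).comp ((c k)⁻¹ • ContinuousLinearMap.id ℝ
        (EuclideanSpace ℝ (Fin n)))) x := by
    intro k x
    have h1 : HasFDerivAt (fun y : E => (c k)⁻¹ • y)
        ((c k)⁻¹ • ContinuousLinearMap.id ℝ (EuclideanSpace ℝ (Fin n))) x :=
      ((c k)⁻¹ • ContinuousLinearMap.id ℝ (EuclideanSpace ℝ (Fin n))).hasFDerivAt
    exact (((χ.contDiff (n := (⊤ : ℕ∞))).differentiable (by norm_num) _).hasFDerivAt).comp x h1
  have hχkdb : ∀ k (x v : E), |fderiv ℝ (χk k) x v| ≤ M * ‖v‖ := by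
    intro k x v
    rw [(hχkd k x).fderiv]
    simp only [ContinuousLinearMap.coe_comp', Function.comp_apply,
      ContinuousLinearMap.smul_apply, ContinuousLinearMap.coe_id', id_eq, _root_.map_smul,
      smul_eq_mul]
    rw [abs_mul]
    have h2 : |fderiv ℝ (⇑χ) ((c k)⁻¹ • x) v| ≤ M * ‖v‖ :=
      le_trans ((fderiv ℝ (⇑χ) ((c k)⁻¹ • x)).le_opNorm v)
        (mul_le_mul_of_nonneg_right (hM _) (norm_nonneg v))
    have h3 : |(c k)⁻¹| ≤ 1 := by
      rw [abs_of_pos (inv_pos.2 (hc0 k))]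
      exact inv_le_one_of_one_le₀ (hc1 k)
    calc |(c k)⁻¹| * |fderiv ℝ (⇑χ) ((c k)⁻¹ • x) v| ≤ 1 * (M * ‖v‖) :=
          mul_le_mul h3 h2 (abs_nonneg _) one_pos.le
      _ = M * ‖v‖ := one_mul _
  have hev : ∀ x : E, ∀ k, ‖x‖ < c k → χk k x = 1 ∧ fderiv ℝ (χk k) x = 0 := by
    intro x k hk
    have hone : ∀ y : E, ‖y‖ < c k → χk k y = 1 := by
      intro y hy
      apply χ.one_of_mem_closedBall
      simp only [Metric.mem_closedBall, dist_zero_right, norm_smul, norm_inv,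
        Real.norm_eq_abs, abs_of_pos (hc0 k)]
      rw [inv_mul_le_iff₀ (hc0 k), mul_one]
      linarith
    refine ⟨hone x hk, ?_⟩
    have hopen : IsOpen {y : E | ‖y‖ < c k} := by
      have : {y : E | ‖y‖ < c k} = Metric.ball 0 (c k) := by
        ext y; simp [Metric.mem_ball, dist_zero_right]
      rw [this]; exact Metric.isOpen_ball
    have heq : χk k =ᶠ[nhds x] (fun _ => (1:ℝ)) := by
      filter_upwards [hopen.mem_nhds hk] with y hy
      exact hone y hy
    rw [heq.fderiv_eq]
    exact fderiv_const_apply 1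
  set u : ℕ → E → ℝ := fun k x => χk k x * g x with hu
  have hus : ∀ k, ContDiff ℝ ∞ (u k) := fun k => (hχks k).mul hg
  have hucs : ∀ k, HasCompactSupport (u k) := by
    intro k
    apply HasCompactSupport.intro (isCompact_closedBall (0:E) (2 * c k))
    intro x hx
    simp only [Metric.mem_closedBall, dist_zero_right, not_le] at hx
    have hz : χk k x = 0 := by
      apply χ.zero_of_le_dist
      simp only [dist_zero_right, norm_smul, norm_inv, Real.norm_eq_abs, abs_of_pos (hc0 k)]
      rw [le_inv_mul_iff₀ (hc0 k)]
      linarith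
    simp only [hu, hz, zero_mul]
  have hprod : ∀ k (x : E), (inner ℝ (gradient (u k) x) (gradient p x) : ℝ)
      = χk k x * (inner ℝ (gradient g x) (gradient p x) : ℝ)
        + g x * fderiv ℝ (χk k) x (gradient p x) := by
    intro k x
    rw [inner_gradient _ x _ ((hus k).differentiable (by norm_num) x)]
    have hd : HasFDerivAt (u k)
        (χk k x • fderiv ℝ g x + g x • fderiv ℝ (χk k) x) x :=
      (((hχks k).differentiable (by norm_num) x).hasFDerivAt).mul
        ((hg.differentiable (by norm_num) x).hasFDerivAt)
    rw [hd.fderiv]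
    simp only [ContinuousLinearMap.add_apply, ContinuousLinearMap.coe_smul', Pi.smul_apply,
      smul_eq_mul]
    rw [← inner_gradient g x _ (hg.differentiable (by norm_num) x)]
  have EK : ∀ k, ∫ x, (inner ℝ (gradient (u k) x) (gradient p x) : ℝ) ∂ν
      = (m / 2) * ∫ x, χk k x * (g x * p x) ∂ν := by
    intro k
    have h1 := ibp_compact (u k) p (hus k) (hucs k) hp
    rw [← integral_gauss n (fun x => (inner ℝ (gradient (u k) x) (gradient p x) : ℝ)),
      ← integral_gauss n (fun x => u k x * driftLap 1 p x)] at h1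
    rw [hν, h1]
    have h2 : (fun x : E => u k x * driftLap 1 p x)
        = fun x => (-(m/2)) * (χk k x * (g x * p x)) := by
      ext x
      rw [hpeig x]
      simp only [hu]
      ring
    rw [h2, integral_const_mul]
    ring
  have hmes : ∀ k, AEStronglyMeasurable
      (fun x => (inner ℝ (gradient (u k) x) (gradient p x) : ℝ)) ν :=
    fun k => (Continuous.inner (continuous_gradient (hus k)) hpc).aestronglyMeasurable
  have hgp2 : Integrable (fun x => ‖gradient g x‖ * ‖gradient p x‖) ν := by
    apply integrable_mul_sq ((hgc.norm.mul hpc.norm).aestronglyMeasurable)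
    · simpa using hggrad
    · simpa using hpgrad
  have hggp : Integrable (fun x => |g x| * ‖gradient p x‖) ν := by
    apply integrable_mul_sq ((hg.continuous.abs.mul hpc.norm).aestronglyMeasurable)
    · simpa [sq_abs] using hgL2
    · simpa using hpgrad
  have hgpint : Integrable (fun x => g x * p x) ν :=
    integrable_mul_sq ((hg.continuous.mul hp.continuous).aestronglyMeasurable) hgL2 hpL2
  have hbound_int : Integrable
      (fun x => ‖gradient g x‖ * ‖gradient p x‖ + M * (|g x| * ‖gradient p x‖)) ν :=
    hgp2.add (hggp.const_mul M)
  have T1 : Tendsto (fun k => ∫ x, (inner ℝ (gradient (u k) x) (gradient p x) : ℝ) ∂ν)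
      atTop (nhds (∫ x, (inner ℝ (gradient g x) (gradient p x) : ℝ) ∂ν)) := by
    apply tendsto_integral_of_dominated_convergence _ hmes hbound_int
    · intro k
      filter_upwards with x
      rw [Real.norm_eq_abs, hprod k x]
      have h1 : |χk k x * (inner ℝ (gradient g x) (gradient p x) : ℝ)|
          ≤ ‖gradient g x‖ * ‖gradient p x‖ := by
        rw [abs_mul, abs_of_nonneg (hχk01 k x).1]
        calc χk k x * |(inner ℝ (gradient g x) (gradient p x) : ℝ)|
            ≤ 1 * |(inner ℝ (gradient g x) (gradient p x) : ℝ)| :=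
              mul_le_mul_of_nonneg_right (hχk01 k x).2 (abs_nonneg _)
          _ = |(inner ℝ (gradient g x) (gradient p x) : ℝ)| := one_mul _
          _ ≤ ‖gradient g x‖ * ‖gradient p x‖ := abs_real_inner_le_norm _ _
      have h2 : |g x * fderiv ℝ (χk k) x (gradient p x)| ≤ M * (|g x| * ‖gradient p x‖) := by
        rw [abs_mul]
        calc |g x| * |fderiv ℝ (χk k) x (gradient p x)| ≤ |g x| * (M * ‖gradient p x‖) :=
              mul_le_mul_of_nonneg_left (hχkdb k x _) (abs_nonneg _)
          _ = M * (|g x| * ‖gradient p x‖) := by ring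
      calc |χk k x * (inner ℝ (gradient g x) (gradient p x) : ℝ)
            + g x * fderiv ℝ (χk k) x (gradient p x)|
          ≤ |χk k x * (inner ℝ (gradient g x) (gradient p x) : ℝ)|
            + |g x * fderiv ℝ (χk k) x (gradient p x)| := abs_add_le _ _
        _ ≤ ‖gradient g x‖ * ‖gradient p x‖ + M * (|g x| * ‖gradient p x‖) :=
            add_le_add h1 h2
    · filter_upwards with x
      apply Tendsto.congr' _ tendsto_const_nhds
      filter_upwards [eventually_atTop.2 ⟨⌈‖x‖⌉₊, fun k hk => hk⟩] with k hk
      have hlt : ‖x‖ < c k := by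
        have h1 : ‖x‖ ≤ (⌈‖x‖⌉₊ : ℝ) := Nat.le_ceil _
        have hk' : ((⌈‖x‖⌉₊ : ℕ) : ℝ) ≤ (k : ℝ) := by exact_mod_cast hk
        change ‖x‖ < (k : ℝ) + 1
        linarith
      obtain ⟨h1, h2⟩ := hev x k hlt
      rw [hprod k x, h1, h2]
      simp
  have T2 : Tendsto (fun k => (m / 2) * ∫ x, χk k x * (g x * p x) ∂ν)
      atTop (nhds ((m / 2) * ∫ x, g x * p x ∂ν)) := by
    apply Filter.Tendsto.const_mul
    apply tendsto_integral_of_dominated_convergence (fun x => |g x * p x|)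
      (fun k => ((hχks k).continuous.mul
        (hg.continuous.mul hp.continuous)).aestronglyMeasurable) hgpint.abs
    · intro k
      filter_upwards with x
      simp only [Pi.mul_apply]
      rw [Real.norm_eq_abs, abs_mul, abs_of_nonneg (hχk01 k x).1]
      calc χk k x * |g x * p x| ≤ 1 * |g x * p x| :=
            mul_le_mul_of_nonneg_right (hχk01 k x).2 (abs_nonneg _)
        _ ≤ |g x * p x| := by rw [one_mul]
    · filter_upwards with x
      apply Tendsto.congr' _ tendsto_const_nhds
      filter_upwards [eventually_atTop.2 ⟨⌈‖x‖⌉₊, fun k hk => hk⟩] with k hk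
      have hlt : ‖x‖ < c k := by
        have h1 : ‖x‖ ≤ (⌈‖x‖⌉₊ : ℝ) := Nat.le_ceil _
        have hk' : ((⌈‖x‖⌉₊ : ℕ) : ℝ) ≤ (k : ℝ) := by exact_mod_cast hk
        change ‖x‖ < (k : ℝ) + 1
        linarith
      obtain ⟨h1, _⟩ := hev x k hlt
      simp only [Pi.mul_apply]
      rw [h1, one_mul]
  exact tendsto_nhds_unique (T1.congr fun k => EK k) T2

end FreqAux

/-- Frequency comparison with an eigenfunction: if `∫ w² dν = 1` and `p̂` lies in the
`m`-eigenspace of `−2Δ_f` (so its frequency equals `m`), then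
`|N^w − m| ≤ 4∫|∇(w−p̂)|² dν + 8m ∫ (w−p̂)² dν`, where `N^w = 2∫|∇w|² dν`. -/
theorem statement_16 (n : ℕ) (w : EuclideanSpace ℝ (Fin n) → ℝ)
    (hw : ContDiff ℝ (⊤ : ℕ∞) w)
    (hwL2 : Integrable (fun x => (w x) ^ 2) (gauss n))
    (hwgrad : Integrable (fun x => ‖gradient w x‖ ^ 2) (gauss n))
    (hnorm : ∫ x, (w x) ^ 2 ∂(gauss n) = 1)
    (m : ℕ) (phat : EuclideanSpace ℝ (Fin n) → ℝ)
    (hp : ContDiff ℝ (⊤ : ℕ∞) phat)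
    (hpeig : ∀ x, driftLap 1 phat x = -((m : ℝ) / 2) * phat x)
    (hpL2 : Integrable (fun x => (phat x) ^ 2) (gauss n))
    (hpgrad : Integrable (fun x => ‖gradient phat x‖ ^ 2) (gauss n)) :
    |2 * (∫ x, ‖gradient w x‖ ^ 2 ∂(gauss n)) - (m : ℝ)|
      ≤ 4 * ∫ x, ‖gradient (fun y => w y - phat y) x‖ ^ 2 ∂(gauss n)
        + 8 * (m : ℝ) * ∫ x, (w x - phat x) ^ 2 ∂(gauss n) := by
  classical
  open scoped ContDiff in
  have hw' : ContDiff ℝ ∞ w := hw.of_le (by simp)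
  have hp' : ContDiff ℝ ∞ phat := hp.of_le (by simp)
  have hdw : ∀ x, DifferentiableAt ℝ w x := fun x => hw'.differentiable (by norm_num) x
  have hdp : ∀ x, DifferentiableAt ℝ phat x := fun x => hp'.differentiable (by norm_num) x
  have hgsub : ∀ x, gradient (fun y => w y - phat y) x = gradient w x - gradient phat x := by
    intro x
    simp only [gradient]
    rw [fderiv_fun_sub (hdw x) (hdp x), map_sub]
  -- the two integration-by-parts identities
  have hA : ∫ x, (inner ℝ (gradient w x) (gradient phat x) : ℝ) ∂(gauss n)
      = ((m : ℝ) / 2) * ∫ x, w x * phat x ∂(gauss n) :=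
    FreqAux.ibp_gauss w phat hw' hp' hwL2 hwgrad hpL2 hpgrad (m : ℝ) hpeig
  have hB : ∫ x, (inner ℝ (gradient phat x) (gradient phat x) : ℝ) ∂(gauss n)
      = ((m : ℝ) / 2) * ∫ x, phat x * phat x ∂(gauss n) :=
    FreqAux.ibp_gauss phat phat hp' hp' hpL2 hpgrad hpL2 hpgrad (m : ℝ) hpeig
  -- integrability of cross terms
  have hwc := FreqAux.continuous_gradient hw'
  have hpc := FreqAux.continuous_gradient hp'
  have hcross : Integrable (fun x => (inner ℝ (gradient w x) (gradient phat x) : ℝ))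
      (gauss n) := by
    refine Integrable.mono ((hwgrad.add hpgrad).div_const 2)
      ((Continuous.inner hwc hpc).aestronglyMeasurable) ?_
    filter_upwards with x
    simp only [Pi.add_apply]
    rw [Real.norm_eq_abs, Real.norm_eq_abs]
    rw [abs_of_nonneg (by positivity : (0:ℝ) ≤ (‖gradient w x‖ ^ 2 + ‖gradient phat x‖ ^ 2) / 2)]
    have h1 := abs_real_inner_le_norm (gradient w x) (gradient phat x)
    nlinarith [sq_nonneg (‖gradient w x‖ - ‖gradient phat x‖), norm_nonneg (gradient w x),
      norm_nonneg (gradient phat x)]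
  have hwp : Integrable (fun x => w x * phat x) (gauss n) :=
    FreqAux.integrable_mul_sq
      ((hw'.continuous.mul hp'.continuous).aestronglyMeasurable) hwL2 hpL2
  -- expansion of the gradient difference integral
  have hD : ∫ x, ‖gradient (fun y => w y - phat y) x‖ ^ 2 ∂(gauss n)
      = (∫ x, ‖gradient w x‖ ^ 2 ∂(gauss n))
        - 2 * (∫ x, (inner ℝ (gradient w x) (gradient phat x) : ℝ) ∂(gauss n))
        + ∫ x, (inner ℝ (gradient phat x) (gradient phat x) : ℝ) ∂(gauss n) := by
    have hpt : (fun x => ‖gradient (fun y => w y - phat y) x‖ ^ 2)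
        = fun x => ‖gradient w x‖ ^ 2
            - 2 * (inner ℝ (gradient w x) (gradient phat x) : ℝ)
            + (inner ℝ (gradient phat x) (gradient phat x) : ℝ) := by
      ext x
      rw [hgsub x, norm_sub_sq_real, real_inner_self_eq_norm_sq]
    have i1 : Integrable (fun x => ‖gradient w x‖ ^ 2
        - 2 * (inner ℝ (gradient w x) (gradient phat x) : ℝ)) (gauss n) :=
      hwgrad.sub (hcross.const_mul 2)
    have i2 : Integrable (fun x => (inner ℝ (gradient phat x) (gradient phat x) : ℝ)) (gauss n) := by
      simpa only [real_inner_self_eq_norm_sq] using hpgrad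
    rw [hpt, integral_add i1 i2, integral_sub hwgrad (hcross.const_mul 2), integral_const_mul]
  -- expansion of the L² difference integral
  have hE : ∫ x, (w x - phat x) ^ 2 ∂(gauss n)
      = 1 - 2 * (∫ x, w x * phat x ∂(gauss n)) + ∫ x, phat x * phat x ∂(gauss n) := by
    have hpt : (fun x => (w x - phat x) ^ 2)
        = fun x => w x ^ 2 - 2 * (w x * phat x) + phat x * phat x := by
      ext x; ring
    have i3 : Integrable (fun x => w x ^ 2 - 2 * (w x * phat x)) (gauss n) :=
      hwL2.sub (hwp.const_mul 2)
    have i4 : Integrable (fun x => phat x * phat x) (gauss n) := by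
      simpa [sq] using hpL2
    rw [hpt, integral_add i3 i4, integral_sub hwL2 (hwp.const_mul 2),
      integral_const_mul, hnorm]
  have hD0 : 0 ≤ ∫ x, ‖gradient (fun y => w y - phat y) x‖ ^ 2 ∂(gauss n) :=
    integral_nonneg fun x => by positivity
  have hE0 : 0 ≤ ∫ x, (w x - phat x) ^ 2 ∂(gauss n) :=
    integral_nonneg fun x => by positivity
  have hm0 : (0:ℝ) ≤ (m : ℝ) := Nat.cast_nonneg m
  have hmE0 : 0 ≤ (m : ℝ) * ∫ x, (w x - phat x) ^ 2 ∂(gauss n) := mul_nonneg hm0 hE0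
  have key : 2 * (∫ x, ‖gradient w x‖ ^ 2 ∂(gauss n)) - (m : ℝ)
      = 2 * (∫ x, ‖gradient (fun y => w y - phat y) x‖ ^ 2 ∂(gauss n))
        - (m : ℝ) * ∫ x, (w x - phat x) ^ 2 ∂(gauss n) := by
    rw [hD, hE, hA, hB]
    ring
  rw [key, abs_le]
  constructor
  · linarith
  · linarith
end
end
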